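/- In the one-dimensional GBM₁(r_s, r_d) with r_s > 2r_d, condition on vertices u ∈ V₁, v ∈ V₂ with (u,v) an edge (so d_L(X_u, X_v) ≤ r_d). Then, conditioned on the positions of u and v, the number of common neighbors of u and v is distributed as Bin(n − 2, 2r_d), independently of d_L(X_u, X_v). -/

import Mathlib

open MeasureTheory ProbabilityTheory

/-- Geodesic distance on the circle of circumference 1, identified with `[0,1)`. -/
noncomputable def dL (x y : ℝ) : ℝ := min |x - y| (1 - |x - y|)

/-!
On `[0,1)`, identified with the circle `ℝ/ℤ`, `dL` is the circle metric. Since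
`d_L(X_u, X_v) + r_d ≤ r_s`, the triangle inequality makes the `r_s`-constraint on a common
neighbour redundant given the `r_d`-constraint, so each of the other `n - 2` vertices is a
common neighbour exactly when its position lies in the closed arc of radius `r_d` around `X_v`
(if it is in `V₁`) or `X_u` (if it is in `V₂`). Every such arc has measure `2 r_d`, wherever it
is centred, and the positions are independent, so the count is binomial.
-/

theorem setOf_setOf_mem_eq_finset {ι Ω β : Type*} [DecidableEq ι] (W : ι → Ω → β)
    (S : ι → Set β) (s : Finset ι) :
    {ω | {i | W i ω ∈ S i} = (s : Set ι)}
      = ⋂ i, W i ⁻¹' (if i ∈ s then S i else (S i)ᶜ) := by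
  ext ω
  simp only [Set.mem_ofPred_eq, Set.ext_iff, Finset.mem_coe, Set.mem_iInter, Set.mem_preimage]
  refine forall_congr' fun i => ?_
  split_ifs with hi <;> simp [hi]

section IndependentTrials

variable {ι Ω β : Type*} [Fintype ι] [MeasurableSpace Ω] [MeasurableSpace β]
  {μ : Measure Ω} [IsProbabilityMeasure μ] {W : ι → Ω → β} {S : ι → Set β} {p : ℝ}

theorem measurableSet_setOf_setOf_mem_eq_finset (hmeas : ∀ i, Measurable (W i))
    (hS : ∀ i, MeasurableSet (S i)) (s : Finset ι) :
    MeasurableSet {ω | {i | W i ω ∈ S i} = (s : Set ι)} := by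
  classical
  rw [setOf_setOf_mem_eq_finset]
  exact .iInter fun i => hmeas i (by split_ifs; exacts [hS i, (hS i).compl])

theorem ProbabilityTheory.iIndepFun.measure_setOf_mem_eq_finset (hW : iIndepFun W μ)
    (hmeas : ∀ i, Measurable (W i)) (hS : ∀ i, MeasurableSet (S i)) (hp : 0 ≤ p)
    (hprob : ∀ i, μ (W i ⁻¹' S i) = ENNReal.ofReal p) (s : Finset ι) :
    μ {ω | {i | W i ω ∈ S i} = (s : Set ι)}
      = ENNReal.ofReal p ^ s.card * ENNReal.ofReal (1 - p) ^ (Fintype.card ι - s.card) := by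
  classical
  have hfactor : ∀ i, μ (W i ⁻¹' if i ∈ s then S i else (S i)ᶜ)
      = if i ∈ s then ENNReal.ofReal p else ENNReal.ofReal (1 - p) := fun i => by
    split_ifs
    · exact hprob i
    · rw [Set.preimage_compl, prob_compl_eq_one_sub (hmeas i (hS i)), hprob i,
        ENNReal.ofReal_sub _ hp, ENNReal.ofReal_one]
  have hprod := hW.measure_inter_preimage_eq_mul Finset.univ fun i _ =>
    (by split_ifs; exacts [hS i, (hS i).compl] : MeasurableSet (if i ∈ s then S i else (S i)ᶜ))
  simp only [Finset.mem_univ, Set.iInter_true, hfactor] at hprod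
  rw [setOf_setOf_mem_eq_finset, hprod, Finset.prod_ite, Finset.prod_const, Finset.prod_const,
    Finset.filter_mem_eq_inter, Finset.univ_inter, Finset.filter_not,
    Finset.filter_mem_eq_inter, Finset.univ_inter,
    ← Finset.compl_eq_univ_sdiff, Finset.card_compl]

theorem ProbabilityTheory.iIndepFun.measure_card_mem_eq_binomial (hW : iIndepFun W μ)
    (hmeas : ∀ i, Measurable (W i)) (hS : ∀ i, MeasurableSet (S i)) (hp₀ : 0 ≤ p)
    (hp₁ : p ≤ 1) (hprob : ∀ i, μ (W i ⁻¹' S i) = ENNReal.ofReal p) (k : ℕ) :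
    μ {ω | Nat.card {i // W i ω ∈ S i} = k}
      = ENNReal.ofReal ((Fintype.card ι).choose k * p ^ k * (1 - p) ^ (Fintype.card ι - k)) := by
  classical
  let pattern : Finset ι → Set Ω := fun s => {ω | {i | W i ω ∈ S i} = (s : Set ι)}
  have hevent : {ω | Nat.card {i // W i ω ∈ S i} = k}
      = ⋃ s ∈ Finset.powersetCard k Finset.univ, pattern s := by
    ext ω
    simp only [Set.mem_ofPred_eq, Nat.card_eq_fintype_card, Fintype.card_subtype,
      Set.mem_iUnion, Finset.mem_powersetCard, Finset.subset_univ, true_and, exists_prop, pattern]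
    refine ⟨fun h => ⟨_, h, by simp⟩, fun ⟨s, hs, h⟩ => ?_⟩
    rw [← hs]
    congr 1
    rw [← Finset.coe_inj]
    simpa using h
  have hdisj : (Finset.powersetCard k (Finset.univ : Finset ι) : Set (Finset ι)).PairwiseDisjoint
      pattern := fun s _ t _ hst =>
    Set.disjoint_left.2 fun ω hs ht => hst (Finset.coe_injective (hs.symm.trans ht))
  have hpattern : ∀ s ∈ Finset.powersetCard k Finset.univ,
      μ (pattern s) = ENNReal.ofReal p ^ k * ENNReal.ofReal (1 - p) ^ (Fintype.card ι - k) :=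
    fun s hs => by
      rw [hW.measure_setOf_mem_eq_finset hmeas hS hp₀ hprob, (Finset.mem_powersetCard.1 hs).2]
  rw [hevent, measure_biUnion_finset hdisj fun s _ => ?_, Finset.sum_congr rfl hpattern,
    Finset.sum_const, Finset.card_powersetCard, Finset.card_univ, nsmul_eq_mul,
    ENNReal.ofReal_mul (by positivity), ENNReal.ofReal_mul (by positivity),
    ENNReal.ofReal_pow hp₀, ENNReal.ofReal_pow (sub_nonneg.2 hp₁), ENNReal.ofReal_natCast,
    mul_assoc]
  exact measurableSet_setOf_setOf_mem_eq_finset hmeas hS s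

end IndependentTrials

theorem UnitAddCircle.norm_coe_eq_min {t : ℝ} (ht : |t| ≤ 1) :
    ‖(t : UnitAddCircle)‖ = min |t| (1 - |t|) := by
  have habs : ‖(t : UnitAddCircle)‖ = ‖((|t| : ℝ) : UnitAddCircle)‖ := by
    rcases abs_cases t with ⟨h, -⟩ | ⟨h, -⟩
    · rw [h]
    · rw [h, AddCircle.coe_neg, norm_neg]
  rw [habs]
  rcases le_or_gt |t| (1 / 2) with hle | hgt
  · rw [(AddCircle.norm_coe_eq_abs_iff _ one_ne_zero).2 (by simpa using hle), abs_abs,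
      min_eq_left (by linarith)]
  · have hshift : |(|t| - 1)| = 1 - |t| := by rw [abs_of_nonpos (by linarith), neg_sub]
    rw [← sub_add_cancel |t| 1, AddCircle.coe_add_period,
      (AddCircle.norm_coe_eq_abs_iff _ one_ne_zero).2 (by rw [hshift]; norm_num; linarith),
      hshift, sub_add_cancel, min_eq_right (by linarith)]

theorem abs_sub_le_one_of_mem_Ico {a b : ℝ} (ha : a ∈ Set.Ico (0 : ℝ) 1)
    (hb : b ∈ Set.Ico (0 : ℝ) 1) : |a - b| ≤ 1 :=
  abs_sub_le_iff.2 ⟨by linarith [ha.2, hb.1], by linarith [ha.1, hb.2]⟩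

theorem dL_eq_dist {a b : ℝ} (hab : |a - b| ≤ 1) :
    dL a b = dist (a : UnitAddCircle) (b : UnitAddCircle) := by
  rw [dist_eq_norm, ← AddCircle.coe_sub, UnitAddCircle.norm_coe_eq_min hab, dL]

theorem dL_comm (a b : ℝ) : dL a b = dL b a := by
  rw [dL, dL, abs_sub_comm]

theorem dL_triangle {a b c : ℝ} (ha : a ∈ Set.Ico (0 : ℝ) 1) (hb : b ∈ Set.Ico (0 : ℝ) 1)
    (hc : c ∈ Set.Ico (0 : ℝ) 1) : dL a c ≤ dL a b + dL b c := by
  rw [dL_eq_dist (abs_sub_le_one_of_mem_Ico ha hc), dL_eq_dist (abs_sub_le_one_of_mem_Ico ha hb),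
    dL_eq_dist (abs_sub_le_one_of_mem_Ico hb hc)]
  exact dist_triangle _ _ _

theorem continuous_dL_left (y : ℝ) : Continuous fun w => dL w y := by
  unfold dL
  fun_prop

theorem volume_setOf_dL_le_inter_Ico {y : ℝ} (hy : y ∈ Set.Ico (0 : ℝ) 1) (r : ℝ) :
    volume ({w | dL w y ≤ r} ∩ Set.Ico 0 1) = ENNReal.ofReal (min 1 (2 * r)) := by
  have hball : {w | dL w y ≤ r} ∩ Set.Ico 0 1
      = (↑) ⁻¹' Metric.closedBall (y : UnitAddCircle) r ∩ Set.Ico 0 1 := by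
    ext w
    simp only [Set.mem_inter_iff, Set.mem_ofPred_eq, Set.mem_preimage, Metric.mem_closedBall,
      and_congr_left_iff]
    intro hw
    rw [dL_eq_dist (abs_sub_le_one_of_mem_Ico hw hy)]
  have hmk := UnitAddCircle.measurePreserving_mk 0
  rw [zero_add] at hmk
  rw [hball, ← Measure.restrict_apply' measurableSet_Ico,
    Measure.restrict_congr_set Ico_ae_eq_Ioc,
    hmk.measure_preimage measurableSet_closedBall.nullMeasurableSet, AddCircle.volume_closedBall]

/-- `u ∈ V₁` is at `xu`, `v ∈ V₂` at `xv`; `b = true` iff the third vertex is in `V₁`. -/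
def commonNeighborRegion (rs rd xu xv : ℝ) (b : Bool) : Set ℝ :=
  {w | if b = true then dL w xu ≤ rs ∧ dL w xv ≤ rd else dL w xu ≤ rd ∧ dL w xv ≤ rs}

section CommonNeighborRegion

variable {rs rd xu xv : ℝ}

theorem measurableSet_commonNeighborRegion (b : Bool) :
    MeasurableSet (commonNeighborRegion rs rd xu xv b) := by
  have hmeas : ∀ y r, MeasurableSet {w | dL w y ≤ r} := fun y r =>
    measurableSet_le (continuous_dL_left y).measurable measurable_const
  cases b <;> exact (hmeas _ _).inter (hmeas _ _)

theorem commonNeighborRegion_inter_Ico (hxu : xu ∈ Set.Ico (0 : ℝ) 1)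
    (hxv : xv ∈ Set.Ico (0 : ℝ) 1) (h : dL xu xv + rd ≤ rs) (b : Bool) :
    commonNeighborRegion rs rd xu xv b ∩ Set.Ico 0 1
      = {w | dL w (if b = true then xv else xu) ≤ rd} ∩ Set.Ico 0 1 := by
  ext w
  simp only [commonNeighborRegion, Set.mem_inter_iff, Set.mem_ofPred_eq, and_congr_left_iff]
  intro hw
  cases b
  · have := dL_triangle hw hxu hxv
    simp only [Bool.false_eq_true, if_false, and_iff_left_iff_imp]
    intro hwu
    linarith
  · have := dL_triangle hw hxv hxu
    rw [dL_comm xv xu] at this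
    simp only [if_true, and_iff_right_iff_imp]
    intro hwv
    linarith

theorem volume_commonNeighborRegion_inter_Ico (hxu : xu ∈ Set.Ico (0 : ℝ) 1)
    (hxv : xv ∈ Set.Ico (0 : ℝ) 1) (h : dL xu xv + rd ≤ rs) (hrd : rd ≤ 1 / 2) (b : Bool) :
    volume (commonNeighborRegion rs rd xu xv b ∩ Set.Ico 0 1) = ENNReal.ofReal (2 * rd) := by
  rw [commonNeighborRegion_inter_Ico hxu hxv h,
    volume_setOf_dL_le_inter_Ico (by split_ifs <;> assumption), min_eq_right (by linarith)]

end CommonNeighborRegion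

theorem gbm_common_neighbors_diff_cluster_general
    {Ω : Type*} [MeasurableSpace Ω] (μ : Measure Ω) [IsProbabilityMeasure μ]
    (n : ℕ)
    (rs rd x : ℝ) (hrd : 0 ≤ rd) (h1 : 2 * rd < rs) (h2 : rs ≤ 1/2)
    (hxd : x ≤ rd)
    (xu xv : ℝ) (hxu : xu ∈ Set.Ico (0:ℝ) 1) (hxv : xv ∈ Set.Ico (0:ℝ) 1)
    (hx : dL xu xv = x)
    (W : Fin (n - 2) → Ω → ℝ) (c : Fin (n - 2) → Bool)
    (hmeas : ∀ i, Measurable (W i))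
    (hdist : ∀ i, μ.map (W i) = volume.restrict (Set.Ico (0:ℝ) 1))
    (hindep : iIndepFun W μ)
    (k : ℕ) :
    μ {ω | Nat.card {i : Fin (n - 2) //
          if c i = true then dL (W i ω) xu ≤ rs ∧ dL (W i ω) xv ≤ rd
          else dL (W i ω) xu ≤ rd ∧ dL (W i ω) xv ≤ rs} = k}
      = ENNReal.ofReal (((n - 2).choose k : ℝ) * (2 * rd) ^ k *
          (1 - 2 * rd) ^ (n - 2 - k)) := by
  have hregion : dL xu xv + rd ≤ rs := by linarith
  have hsuccess : ∀ i, μ (W i ⁻¹' commonNeighborRegion rs rd xu xv (c i))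
      = ENNReal.ofReal (2 * rd) := fun i => by
    rw [← Measure.map_apply (hmeas i) (measurableSet_commonNeighborRegion _), hdist i,
      Measure.restrict_apply (measurableSet_commonNeighborRegion _),
      volume_commonNeighborRegion_inter_Ico hxu hxv hregion (by linarith)]
  have hbinom := hindep.measure_card_mem_eq_binomial hmeas
    (fun i => measurableSet_commonNeighborRegion _) (by positivity) (by linarith) hsuccess k
  rwa [Fintype.card_fin] at hbinom

/-- In `GBM₁(r_s, r_d)` with `r_s > 2 r_d`, conditioned on an inter-cluster edge
`(u, v)` with `u ∈ V₁`, `v ∈ V₂` and `d_L(X_u, X_v) = x ≤ r_d`, the number of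
common neighbors is distributed as `Bin(n - 2, 2 r_d)`, independently of `x`.
The other `n - 2` vertices have i.i.d. uniform positions on `[0,1)`;
`c i = true` marks membership in `V₁` (so `n/2 - 1` vertices of each cluster
remain). A common neighbor `z ∈ V₁` must satisfy `d_L(z,u) ≤ r_s` and
`d_L(z,v) ≤ r_d`; a common neighbor `z ∈ V₂` must satisfy `d_L(z,u) ≤ r_d`
and `d_L(z,v) ≤ r_s`. -/
theorem gbm_common_neighbors_diff_cluster
    {Ω : Type*} [MeasurableSpace Ω] (μ : Measure Ω) [IsProbabilityMeasure μ]
    (n : ℕ) (hn : 4 ≤ n) (hn2 : 2 ∣ n)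
    (rs rd x : ℝ) (hrd : 0 ≤ rd) (h1 : 2 * rd < rs) (h2 : rs ≤ 1/2)
    (hxd : x ≤ rd)
    (xu xv : ℝ) (hxu : xu ∈ Set.Ico (0:ℝ) 1) (hxv : xv ∈ Set.Ico (0:ℝ) 1)
    (hx : dL xu xv = x)
    (W : Fin (n - 2) → Ω → ℝ) (c : Fin (n - 2) → Bool)
    (hc : Nat.card {i : Fin (n - 2) // c i = true} = n / 2 - 1)
    (hmeas : ∀ i, Measurable (W i))
    (hdist : ∀ i, μ.map (W i) = volume.restrict (Set.Ico (0:ℝ) 1))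
    (hindep : iIndepFun W μ)
    (k : ℕ) :
    μ {ω | Nat.card {i : Fin (n - 2) //
          if c i = true then dL (W i ω) xu ≤ rs ∧ dL (W i ω) xv ≤ rd
          else dL (W i ω) xu ≤ rd ∧ dL (W i ω) xv ≤ rs} = k}
      = ENNReal.ofReal (((n - 2).choose k : ℝ) * (2 * rd) ^ k *
          (1 - 2 * rd) ^ (n - 2 - k)) :=
  gbm_common_neighbors_diff_cluster_general μ n rs rd x hrd h1 h2 hxd xu xv hxu hxv hx W c hmeas
    hdist hindep k
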